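/- Preglid FR is a cotilting torsion-free class in Mod oFF_Λ R, and Prefrag FR is a cotilting torsion-free class in Mod FF_Λ R. That is, each of these full subcategories is closed under subobjects and under extensions in the ambient abelian category, the inclusion functor admits a left adjoint, and every object of the ambient module category admits an epimorphism from an object of the subcategory. -/

import Mathlib

set_option linter.unusedSectionVars false
set_option maxHeartbeats 1000000
set_option synthInstance.maxHeartbeats 1000000
set_option maxHeartbeats 2000000

noncomputable section

open CategoryTheory CategoryTheory.Limits

universe u

namespace GliderPaper

/-- A `Γ`-filtration `FR` on a unital ring `R`: additive subgroups `F γ` with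
`1 ∈ F 1`, monotone in `γ`, and multiplicative. -/
structure RingFiltration (Γ : Type u) [Group Γ] [PartialOrder Γ] (R : Type u) [Ring R] where
  F : Γ → AddSubgroup R
  one_mem : (1 : R) ∈ F 1
  mono : ∀ {α β : Γ}, α ≤ β → F α ≤ F β
  mul_mem : ∀ {α β : Γ} {a b : R}, a ∈ F α → b ∈ F β → a * b ∈ F (α * β)

variable {Γ : Type u} [Group Γ] [PartialOrder Γ]
  [CovariantClass Γ Γ (· * ·) (· ≤ ·)] [CovariantClass Γ Γ (Function.swap (· * ·)) (· ≤ ·)]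
  {R : Type u} [Ring R]

/-- Objects of the extended filtered companion category `oFF_Λ R`:
the disjoint union `Λ ⊔ {∞}`. -/
inductive OFF (FR : RingFiltration Γ R) (Λ : Set Γ) : Type u
  | of (α : Λ)
  | infty

/-- Objects of the filtered companion category `FF_Λ R`: the set `Λ`. -/
inductive FF (FR : RingFiltration Γ R) (Λ : Set Γ) : Type u
  | of (α : Λ)

variable (FR : RingFiltration Γ R) (Λ : Set Γ)

namespace OFF

/-- `le X Y` holds iff the canonical morphism `1_{X,Y}` is defined, i.e. `X ≤ Y` in `Λ`,
or `Y = ∞`. -/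
def le : OFF FR Λ → OFF FR Λ → Prop
  | of α, of β => (α : Γ) ≤ (β : Γ)
  | _, infty => True
  | infty, of _ => False

open scoped Classical in
/-- The additive subgroup of `R` of morphisms `X ⟶ Y` in `oFF_Λ R`:
`Hom(α,β) = F_{βα⁻¹}R` for `α ≤ β` in `Λ`, `Hom(X,∞) = R`, and `0` otherwise. -/
noncomputable def homGrp : OFF FR Λ → OFF FR Λ → AddSubgroup R
  | of α, of β => if (α : Γ) ≤ (β : Γ) then FR.F ((β : Γ) * (α : Γ)⁻¹) else ⊥
  | _, infty => ⊤
  | infty, of _ => ⊥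

theorem le_refl' : ∀ X : OFF FR Λ, le FR Λ X X
  | of _ => _root_.le_refl _
  | infty => trivial

theorem one_mem_homGrp : ∀ {X Y : OFF FR Λ}, le FR Λ X Y → (1 : R) ∈ homGrp FR Λ X Y
  | of α, of β, h => by
      have h' : (α : Γ) ≤ (β : Γ) := h
      have h1 : (1 : Γ) ≤ (β : Γ) * (α : Γ)⁻¹ := by
        rw [← mul_inv_cancel (α : Γ)]
        exact mul_le_mul_left h' _
      simpa [homGrp, if_pos h'] using FR.mono h1 FR.one_mem
  | of _, infty, _ => trivial
  | infty, infty, _ => trivial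
  | infty, of _, h => h.elim

theorem mul_mem_homGrp : ∀ {X Y Z : OFF FR Λ} {f g : R},
    f ∈ homGrp FR Λ X Y → g ∈ homGrp FR Λ Y Z → g * f ∈ homGrp FR Λ X Z := by
  intro X Y Z f g hf hg
  cases X <;> cases Y <;> cases Z <;> simp only [homGrp] at hf hg ⊢ <;> try trivial
  case of.of.of a b c =>
    by_cases hab : (a : Γ) ≤ (b : Γ)
    · by_cases hbc : (b : Γ) ≤ (c : Γ)
      · rw [if_pos hab] at hf
        rw [if_pos hbc] at hg
        rw [if_pos (le_trans hab hbc)]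
        have := FR.mul_mem hg hf
        rwa [show (c : Γ) * (b : Γ)⁻¹ * ((b : Γ) * (a : Γ)⁻¹) = (c : Γ) * (a : Γ)⁻¹ by
          group] at this
      · rw [if_neg hbc] at hg
        rw [AddSubgroup.mem_bot] at hg
        subst hg
        simp only [zero_mul]
        exact AddSubgroup.zero_mem _
    · rw [if_neg hab] at hf
      rw [AddSubgroup.mem_bot] at hf
      subst hf
      simp only [mul_zero]
      exact AddSubgroup.zero_mem _
  case of.infty.of a c =>
    rw [AddSubgroup.mem_bot] at hg
    subst hg
    simp only [zero_mul]
    exact AddSubgroup.zero_mem _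
  case infty.of.of b c =>
    rw [AddSubgroup.mem_bot] at hf
    subst hf
    simp only [mul_zero]
    exact AddSubgroup.zero_mem _
  case infty.infty.of c =>
    rw [AddSubgroup.mem_bot] at hg
    subst hg
    simp only [zero_mul]
    exact AddSubgroup.zero_mem _

instance : Category (OFF FR Λ) where
  Hom X Y := homGrp FR Λ X Y
  id X := ⟨1, one_mem_homGrp FR Λ (le_refl' FR Λ X)⟩
  comp f g := ⟨g.1 * f.1, mul_mem_homGrp FR Λ f.2 g.2⟩
  id_comp f := Subtype.ext (mul_one f.1)
  comp_id f := Subtype.ext (one_mul f.1)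
  assoc f g h := Subtype.ext (mul_assoc h.1 g.1 f.1).symm

instance : Preadditive (OFF FR Λ) where
  homGroup X Y := inferInstanceAs (AddCommGroup (homGrp FR Λ X Y))
  add_comp _ _ _ f f' g := Subtype.ext (mul_add g.1 f.1 f'.1)
  comp_add _ _ _ f g g' := Subtype.ext (add_mul g.1 g'.1 f.1)

end OFF

namespace FF

/-- The inclusion of the objects of `FF_Λ R` into those of `oFF_Λ R`. -/
def toOFF : FF FR Λ → OFF FR Λ
  | of α => .of α

instance : Category (FF FR Λ) where
  Hom X Y := OFF.homGrp FR Λ (toOFF FR Λ X) (toOFF FR Λ Y)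
  id X := ⟨1, OFF.one_mem_homGrp FR Λ (OFF.le_refl' FR Λ _)⟩
  comp f g := ⟨g.1 * f.1, OFF.mul_mem_homGrp FR Λ f.2 g.2⟩
  id_comp f := Subtype.ext (mul_one f.1)
  comp_id f := Subtype.ext (one_mul f.1)
  assoc f g h := Subtype.ext (mul_assoc h.1 g.1 f.1).symm

instance : Preadditive (FF FR Λ) where
  homGroup X Y := inferInstanceAs (AddCommGroup (OFF.homGrp FR Λ (toOFF FR Λ X) (toOFF FR Λ Y)))
  add_comp _ _ _ f f' g := Subtype.ext (mul_add g.1 f.1 f'.1)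
  comp_add _ _ _ f g g' := Subtype.ext (add_mul g.1 g'.1 f.1)

end FF

/-- The inclusion functor `j : FF_Λ R ⥤ oFF_Λ R`. -/
def jF : FF FR Λ ⥤ OFF FR Λ where
  obj := FF.toOFF FR Λ
  map f := f
  map_id _ := rfl
  map_comp _ _ := rfl

instance : (jF FR Λ).Additive := ⟨rfl⟩

/-- `Mod C`: the category of additive functors from `C` to abelian groups. -/
abbrev Mod (C : Type u) [Category.{u} C] [Preadditive C] : Type (u + 1) :=
  C ⥤+ AddCommGrpCat.{u}

/-- The component at `X` of a morphism in `Mod C`. -/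
def mapp {C : Type u} [Category.{u} C] [Preadditive C] {M N : Mod C} (f : M ⟶ N) (X : C) :
    M.obj.obj X ⟶ N.obj.obj X :=
  f.hom.app X

/-- The canonical morphism `1_{X,Y}` in `oFF_Λ R`, given by `1_R`. -/
def unitHom (X Y : OFF FR Λ) (h : OFF.le FR Λ X Y) : X ⟶ Y :=
  ⟨1, OFF.one_mem_homGrp FR Λ h⟩

/-- The canonical morphism `1_{α,β}` in `FF_Λ R`, given by `1_R`. -/
def unitHomFF (α β : Λ) (h : (α : Γ) ≤ (β : Γ)) : (FF.of α : FF FR Λ) ⟶ FF.of β :=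
  unitHom FR Λ (.of α) (.of β) h

/-- A module `M` over `oFF_Λ R` is a preglider if all the maps `M(1_{X,Y})` are injective. -/
def IsPreglider (M : Mod (OFF FR Λ)) : Prop :=
  ∀ (X Y : OFF FR Λ) (h : OFF.le FR Λ X Y), Function.Injective (M.obj.map (unitHom FR Λ X Y h))

/-- A module `M` over `FF_Λ R` is a prefragment if all the maps `M(1_{α,β})` are injective. -/
def IsPrefragment (M : Mod (FF FR Λ)) : Prop :=
  ∀ (α β : Λ) (h : (α : Γ) ≤ (β : Γ)), Function.Injective (M.obj.map (unitHomFF FR Λ α β h))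

/-- The category of pregliders: the full subcategory of `Mod (oFF_Λ R)` of pregliders. -/
abbrev Preglid : Type (u + 1) :=
  ObjectProperty.FullSubcategory (fun M : Mod (OFF FR Λ) => IsPreglider FR Λ M)

instance : Preadditive (Preglid FR Λ) := Preadditive.inducedCategory _

/-- The category of prefragments: the full subcategory of `Mod (FF_Λ R)` of prefragments. -/
abbrev Prefrag : Type (u + 1) :=
  ObjectProperty.FullSubcategory (fun M : Mod (FF FR Λ) => IsPrefragment FR Λ M)

instance : Preadditive (Prefrag FR Λ) := Preadditive.inducedCategory _

/-- The inclusion `Preglid FR Λ ⥤ Mod (oFF_Λ R)`. -/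
def iotaF : Preglid FR Λ ⥤ Mod (OFF FR Λ) := ObjectProperty.ι _

/-- The inclusion `Prefrag FR Λ ⥤ Mod (FF_Λ R)`. -/
def etaF : Prefrag FR Λ ⥤ Mod (FF FR Λ) := ObjectProperty.ι _

/-- The component at `X` of a morphism of pregliders. -/
def pgapp {M N : Preglid FR Λ} (f : M ⟶ N) (X : OFF FR Λ) :
    M.obj.obj.obj X ⟶ N.obj.obj.obj X :=
  mapp f.hom X

/-- The component at `X` of a morphism of prefragments. -/
def pfapp {M N : Prefrag FR Λ} (f : M ⟶ N) (X : FF FR Λ) :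
    M.obj.obj.obj X ⟶ N.obj.obj.obj X :=
  mapp f.hom X

/-- The class `Σ` of morphisms of pregliders all of whose components at objects of `Λ`
are isomorphisms. -/
def SigmaClass : MorphismProperty (Preglid FR Λ) :=
  fun _ _ f => ∀ α : Λ, IsIso (pgapp FR Λ f (.of α))

/-- The category of glider representations: the localization of `Preglid FR Λ` at `Σ`. -/
abbrev Glid : Type (u + 1) := (SigmaClass FR Λ).Localization

/-- The localization functor `Q : Preglid FR Λ ⥤ Glid FR Λ`. -/
def QF : Preglid FR Λ ⥤ Glid FR Λ := (SigmaClass FR Λ).Q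

/-- The restriction functor `j^* : Mod (oFF_Λ R) ⥤ Mod (FF_Λ R)`. -/
def jStar : Mod (OFF FR Λ) ⥤ Mod (FF FR Λ) where
  obj M := ⟨jF FR Λ ⋙ M.obj, by
    have : M.obj.Additive := M.property; exact (inferInstance : (jF FR Λ ⋙ M.obj).Additive)⟩
  map {M N} f := InducedCategory.homMk (Functor.whiskerLeft (jF FR Λ) f.hom)
  map_id _ := rfl
  map_comp _ _ := rfl

theorem isPrefragment_jStar (M : Mod (OFF FR Λ)) (hM : IsPreglider FR Λ M) :
    IsPrefragment FR Λ ((jStar FR Λ).obj M) :=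
  fun α β h => hM (.of α) (.of β) h

/-- The restriction functor `j^* : Preglid FR Λ ⥤ Prefrag FR Λ`. -/
def jRes : Preglid FR Λ ⥤ Prefrag FR Λ where
  obj M := ⟨(jStar FR Λ).obj M.obj, isPrefragment_jStar FR Λ M.obj M.property⟩
  map f := InducedCategory.homMk ((jStar FR Λ).map f.hom)
  map_id M := InducedCategory.hom_ext ((jStar FR Λ).map_id M.obj)
  map_comp f g := InducedCategory.hom_ext ((jStar FR Λ).map_comp f.hom g.hom)

theorem sigma_isInvertedBy : (SigmaClass FR Λ).IsInvertedBy (jRes FR Λ) := by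
  intro M N f hf
  haveI : (AdditiveFunctor.forget (FF FR Λ) AddCommGrpCat.{u}).Faithful :=
    ObjectProperty.faithful_ι _
  haveI : ∀ X : FF FR Λ, IsIso
      (((ObjectProperty.ι (fun M : Mod (FF FR Λ) => IsPrefragment FR Λ M) ⋙
        AdditiveFunctor.forget _ _).map ((jRes FR Λ).map f)).app X) := by
    rintro ⟨α⟩
    exact hf α
  haveI : IsIso ((ObjectProperty.ι (fun M : Mod (FF FR Λ) => IsPrefragment FR Λ M) ⋙
      AdditiveFunctor.forget _ _).map ((jRes FR Λ).map f)) :=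
    NatIso.isIso_of_isIso_app _
  exact isIso_of_reflects_iso ((jRes FR Λ).map f)
    (ObjectProperty.ι (fun M : Mod (FF FR Λ) => IsPrefragment FR Λ M) ⋙
      AdditiveFunctor.forget _ _)

/-- The canonical fully faithful functor `φ : Glid FR Λ ⥤ Prefrag FR Λ`,
the unique functor with `Q ⋙ φ = j^*`. -/
def phiF : Glid FR Λ ⥤ Prefrag FR Λ :=
  Localization.Construction.lift (jRes FR Λ) (sigma_isInvertedBy FR Λ)

theorem phiF_fac : QF FR Λ ⋙ phiF FR Λ = jRes FR Λ :=
  Localization.Construction.fac _ _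


/-!
Pregliders (prefragments) are the modules on which the canonical morphisms `1_{α,β}` act
injectively, and these morphisms are monomorphisms, composition with them being multiplication
by `1 ∈ R`. So it suffices to show that, for any class `S` of monomorphisms of a
small preadditive category, the `S`-torsion-free modules (those on which `S` acts injectively)
form a cotilting torsion-free class. Closure under subobjects and extensions is pointwise (the
four lemma). Free modules `⊕ᵢ Hom(Xᵢ, -)` are `S`-torsion-free because `S` consists of
monomorphisms, and every module is a quotient of one. The left adjoint sends `M` to `M / t M`,
where `t M` consists of the elements killed by every map to an `S`-torsion-free module; this
quotient is `S`-torsion-free because `M(u) x ∈ t M` forces `x ∈ t M` for `u ∈ S`.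
-/

section ModuleTheory

variable {C : Type u} [Category.{u} C] [Preadditive C]

namespace Mod

theorem naturality_apply {M N : Mod C} (f : M ⟶ N) {X Y : C} (u : X ⟶ Y) (x : M.obj.obj X) :
    mapp f Y (M.obj.map u x) = N.obj.map u (mapp f X x) :=
  ConcreteCategory.congr_hom (f.hom.naturality u) x

@[simp]
theorem mapp_comp_apply {M N P : Mod C} (f : M ⟶ N) (g : N ⟶ P) (X : C) (x : M.obj.obj X) :
    mapp (f ≫ g) X x = mapp g X (mapp f X x) :=
  rfl

theorem hom_ext {M N : Mod C} {f g : M ⟶ N} (h : ∀ X, mapp f X = mapp g X) : f = g :=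
  InducedCategory.hom_ext (NatTrans.ext (funext h))

def evalAt (N : Mod C) {X : C} (x : N.obj.obj X) (Y : C) : (X ⟶ Y) →+ N.obj.obj Y where
  toFun r := N.obj.map r x
  map_zero' := by simp
  map_add' r s := by simp

def free {I : Type u} (X : I → C) : Mod C :=
  ⟨{ obj := fun Y => AddCommGrpCat.of (Π₀ i, (X i ⟶ Y))
     map := fun u => AddCommGrpCat.ofHom
       (DFinsupp.mapRange.addMonoidHom fun i => Preadditive.rightComp (X i) u)
     map_id := by intro Y; ext v i; simp [Preadditive.rightComp]
     map_comp := by intro Y Z W u w; ext v i; simp [Preadditive.rightComp] },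
   ⟨by intro Y Z u w; ext v i; simp [Preadditive.rightComp]⟩⟩

namespace free

variable {I : Type u} {X : I → C}

theorem map_injective {Y Z : C} (u : Y ⟶ Z) [Mono u] :
    Function.Injective ((free X).obj.map u) := fun _ _ h =>
  DFinsupp.ext fun i => (cancel_mono u).mp (congrArg (fun d : Π₀ i, (X i ⟶ Z) => d i) h)

variable [DecidableEq I]

def gen (i : I) : (free X).obj.obj (X i) :=
  DFinsupp.single i (𝟙 (X i))

theorem map_gen {Y : C} (i : I) (r : X i ⟶ Y) :
    (free X).obj.map r (gen i) = (DFinsupp.single i r : Π₀ j, (X j ⟶ Y)) := by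
  change DFinsupp.mapRange.addMonoidHom (fun j => Preadditive.rightComp (X j) r)
    (DFinsupp.single i (𝟙 (X i))) = _
  rw [DFinsupp.mapRange.addMonoidHom_apply, DFinsupp.mapRange_single]
  simp [Preadditive.rightComp]

theorem hom_ext {N : Mod C} {f g : free X ⟶ N}
    (h : ∀ i, mapp f (X i) (gen i) = mapp g (X i) (gen i)) : f = g := by
  refine Mod.hom_ext fun Y => AddCommGrpCat.hom_ext (DFinsupp.addHom_ext fun i r => ?_)
  change mapp f Y (DFinsupp.single i r) = mapp g Y (DFinsupp.single i r)
  rw [← map_gen, naturality_apply, naturality_apply, h]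

def desc (N : Mod C) (x : ∀ i, N.obj.obj (X i)) : free X ⟶ N :=
  InducedCategory.homMk
    { app := fun Y => AddCommGrpCat.ofHom (DFinsupp.sumAddHom fun i => evalAt N (x i) Y)
      naturality := by
        intro Y Z u
        refine AddCommGrpCat.hom_ext (DFinsupp.addHom_ext fun i r => ?_)
        simp [free, evalAt, Preadditive.rightComp] }

@[simp]
theorem desc_gen (N : Mod C) (x : ∀ i, N.obj.obj (X i)) (i : I) :
    mapp (desc N x) (X i) (gen i) = x i := by
  change DFinsupp.sumAddHom _ (DFinsupp.single i (𝟙 (X i)) : Π₀ j, (X j ⟶ X i)) = x i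
  simp [evalAt]

end free

theorem injective_mapp_of_mono {M N : Mod C} (f : N ⟶ M) [Mono f] (X : C) :
    Function.Injective (mapp f X) := by
  intro x y hxy
  have h : free.desc N (fun _ : PUnit => x) ≫ f = free.desc N (fun _ : PUnit => y) ≫ f :=
    free.hom_ext fun _ => by simpa using hxy
  simpa using congrArg (fun g => mapp g X (free.gen PUnit.unit)) ((cancel_mono f).mp h)

theorem exists_free_surjective (M : Mod C) :
    ∃ (I : Type u) (X : I → C) (p : free X ⟶ M), ∀ Y, Function.Surjective (mapp p Y) := by
  classical
  refine ⟨Σ Y, M.obj.obj Y, Sigma.fst, free.desc M Sigma.snd, fun Y y => ?_⟩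
  exact ⟨_, free.desc_gen M Sigma.snd (⟨Y, y⟩ : Σ Y, M.obj.obj Y)⟩

variable (M : Mod C) (K : ∀ X, AddSubgroup (M.obj.obj X))
  (hK : ∀ ⦃X Y : C⦄ (u : X ⟶ Y), K X ≤ (K Y).comap (M.obj.map u).hom)

def quotient : Mod C :=
  ⟨{ obj := fun X => AddCommGrpCat.of (M.obj.obj X ⧸ K X)
     map := fun u => AddCommGrpCat.ofHom (QuotientAddGroup.map _ _ (M.obj.map u).hom (hK u))
     map_id := by intro X; ext x; simp
     map_comp := by intro X Y Z u v; ext x; simp },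
   ⟨by intro X Y u v; ext x; simp⟩⟩

namespace quotient

def mk : M ⟶ quotient M K hK :=
  InducedCategory.homMk
    { app := fun X => AddCommGrpCat.ofHom (QuotientAddGroup.mk' (K X))
      naturality := by intro X Y u; ext x; rfl }

variable {M K hK}

theorem mk_surjective (X : C) : Function.Surjective (mapp (mk M K hK) X) :=
  QuotientAddGroup.mk'_surjective (K X)

theorem mk_eq_zero_iff {X : C} (x : M.obj.obj X) : mapp (mk M K hK) X x = 0 ↔ x ∈ K X :=
  QuotientAddGroup.eq_zero_iff x

theorem hom_ext {N : Mod C} {f g : quotient M K hK ⟶ N} (h : mk M K hK ≫ f = mk M K hK ≫ g) :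
    f = g :=
  Mod.hom_ext fun X => AddCommGrpCat.hom_ext
    (QuotientAddGroup.addMonoidHom_ext _ (congrArg (fun φ => (mapp φ X).hom) h))

def lift {N : Mod C} (φ : M ⟶ N) (hφ : ∀ X, K X ≤ (mapp φ X).hom.ker) :
    quotient M K hK ⟶ N :=
  InducedCategory.homMk
    { app := fun X => AddCommGrpCat.ofHom (QuotientAddGroup.lift _ (mapp φ X).hom (hφ X))
      naturality := by
        intro X Y u
        refine AddCommGrpCat.hom_ext (QuotientAddGroup.addMonoidHom_ext _ ?_)
        ext x
        exact naturality_apply φ u x }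

theorem mk_lift {N : Mod C} (φ : M ⟶ N) (hφ : ∀ X, K X ≤ (mapp φ X).hom.ker) :
    mk M K hK ≫ lift φ hφ = φ :=
  rfl

end quotient

variable (S : MorphismProperty C)

def TorsionFree (M : Mod C) : Prop :=
  ∀ ⦃X Y : C⦄ (u : X ⟶ Y), S u → Function.Injective (M.obj.map u)

theorem torsionFree_free (hS : S ≤ MorphismProperty.monomorphisms C) {I : Type u} (X : I → C) :
    TorsionFree S (free X) := fun _ _ u hu =>
  have : Mono u := hS u hu
  free.map_injective u

variable {S}

theorem TorsionFree.of_mono {M N : Mod C} (f : N ⟶ M) [Mono f] (hM : TorsionFree S M) :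
    TorsionFree S N := fun X _ u hu _ _ hxy =>
  injective_mapp_of_mono f X <| hM u hu <| by simp only [← naturality_apply, hxy]

theorem TorsionFree.of_exact {A B D : Mod C} (f : A ⟶ B) (g : B ⟶ D)
    (hf : ∀ X, Function.Injective (mapp f X)) (hfg : ∀ X, Function.Exact (mapp f X) (mapp g X))
    (hA : TorsionFree S A) (hD : TorsionFree S D) : TorsionFree S B := by
  intro X Y u hu
  -- the four lemma, with a zero first column
  have exact_zero (Z : C) : Function.Exact (0 : PUnit.{u + 1} →+ A.obj.obj Z) (mapp f Z).hom :=
    fun y => ⟨fun hy => ⟨0, ((injective_iff_map_eq_zero _).mp (hf Z) y hy).symm⟩,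
      by rintro ⟨_, rfl⟩; simp⟩
  exact AddMonoidHom.injective_of_surjective_of_injective_of_injective
    0 (mapp f X).hom (mapp g X).hom 0 (mapp f Y).hom (mapp g Y).hom
    0 (A.obj.map u).hom (B.obj.map u).hom (D.obj.map u).hom (by ext; simp)
    (AddMonoidHom.ext (naturality_apply f u)) (AddMonoidHom.ext (naturality_apply g u))
    (exact_zero X) (hfg X) (exact_zero Y) (fun _ => ⟨0, rfl⟩) (hA u hu) (hD u hu)

variable (S) in
def torsion (M : Mod C) (X : C) : AddSubgroup (M.obj.obj X) :=
  ⨅ (N : Mod C) (_ : TorsionFree S N) (φ : M ⟶ N), (mapp φ X).hom.ker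

theorem mem_torsion {M : Mod C} {X : C} {x : M.obj.obj X} :
    x ∈ torsion S M X ↔
      ∀ N : Mod C, TorsionFree S N → ∀ φ : M ⟶ N, mapp φ X x = 0 := by
  simp [torsion]

theorem torsion_le_ker {M N : Mod C} (hN : TorsionFree S N) (φ : M ⟶ N) (X : C) :
    torsion S M X ≤ (mapp φ X).hom.ker := fun _ hx => mem_torsion.1 hx N hN φ

theorem torsion_le_comap {M : Mod C} {X Y : C} (u : X ⟶ Y) :
    torsion S M X ≤ (torsion S M Y).comap (M.obj.map u).hom := fun _ hx =>
  mem_torsion.2 fun N hN φ => by simp [naturality_apply, mem_torsion.1 hx N hN φ]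

theorem mem_torsion_of_map_mem {M : Mod C} {X Y : C} {u : X ⟶ Y} (hu : S u) {x : M.obj.obj X}
    (hx : M.obj.map u x ∈ torsion S M Y) : x ∈ torsion S M X :=
  mem_torsion.2 fun N hN φ => hN u hu <| by simp [← naturality_apply, mem_torsion.1 hx N hN φ]

variable (S) in
abbrev torsionFreeQuotient (M : Mod C) : Mod C :=
  quotient M (torsion S M) fun _ _ => torsion_le_comap

theorem torsionFree_torsionFreeQuotient (M : Mod C) :
    TorsionFree S (torsionFreeQuotient S M) := by
  intro X Y u hu
  rw [injective_iff_map_eq_zero]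
  intro q hq
  obtain ⟨x, rfl⟩ := quotient.mk_surjective X q
  rw [← naturality_apply, quotient.mk_eq_zero_iff] at hq
  exact (quotient.mk_eq_zero_iff x).2 (mem_torsion_of_map_mem hu hq)

variable {P : ObjectProperty (Mod C)}

def torsionFreeQuotientHomEquiv (hP : ∀ M, P M ↔ TorsionFree S M) (M : Mod C)
    (N : P.FullSubcategory) :
    ((⟨torsionFreeQuotient S M, (hP _).2 (torsionFree_torsionFreeQuotient M)⟩ :
      P.FullSubcategory) ⟶ N) ≃ (M ⟶ P.ι.obj N) :=
  Equiv.ofBijective (fun ψ => quotient.mk _ _ _ ≫ ψ.hom)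
    ⟨fun _ _ h => ObjectProperty.hom_ext _ (quotient.hom_ext h),
      fun φ => ⟨ObjectProperty.homMk <|
        quotient.lift φ (torsion_le_ker ((hP _).1 N.property) φ), quotient.mk_lift _ _⟩⟩

theorem exists_leftAdjoint_ι_of_iff_torsionFree (hP : ∀ M, P M ↔ TorsionFree S M) :
    ∃ κ : Mod C ⥤ P.FullSubcategory, Nonempty (κ ⊣ P.ι) :=
  ⟨_, ⟨Adjunction.adjunctionOfEquivLeft (torsionFreeQuotientHomEquiv hP)
    fun M _ _ _ _ => (Category.assoc (quotient.mk M (torsion S M) _) _ _).symm⟩⟩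

end Mod

structure IsCotiltingTorsionFreeClass (P : ObjectProperty (Mod C)) : Prop where
  of_mono : ∀ (M N : Mod C) (f : N ⟶ M), Mono f → P M → P N
  of_exact : ∀ (A B D : Mod C) (f : A ⟶ B) (g : B ⟶ D),
    (∀ X, Function.Injective (mapp f X)) → (∀ X, Function.Surjective (mapp g X)) →
    (∀ X, Function.Exact (mapp f X) (mapp g X)) → P A → P D → P B
  exists_leftAdjoint : ∃ κ : Mod C ⥤ P.FullSubcategory, Nonempty (κ ⊣ P.ι)
  exists_surjective : ∀ M : Mod C, ∃ (N : P.FullSubcategory) (p : P.ι.obj N ⟶ M),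
    ∀ X, Function.Surjective (mapp p X)

theorem isCotiltingTorsionFreeClass_of_iff_torsionFree {S : MorphismProperty C}
    (hS : S ≤ MorphismProperty.monomorphisms C) {P : ObjectProperty (Mod C)}
    (hP : ∀ M, P M ↔ Mod.TorsionFree S M) : IsCotiltingTorsionFreeClass P where
  of_mono M N f _ hM := (hP N).2 (((hP M).1 hM).of_mono f)
  of_exact _ B _ f g hf _ hfg hA hD :=
    (hP B).2 (Mod.TorsionFree.of_exact f g hf hfg ((hP _).1 hA) ((hP _).1 hD))
  exists_leftAdjoint := Mod.exists_leftAdjoint_ι_of_iff_torsionFree hP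
  exists_surjective M := by
    obtain ⟨I, X, p, hp⟩ := Mod.exists_free_surjective M
    exact ⟨⟨Mod.free X, (hP _).2 (Mod.torsionFree_free S hS X)⟩, p, hp⟩

end ModuleTheory

def unitMorphisms : MorphismProperty (OFF FR Λ) :=
  fun X Y u => ∃ h, u = unitHom FR Λ X Y h

instance (X Y : OFF FR Λ) (h : OFF.le FR Λ X Y) : Mono (unitHom FR Λ X Y h) :=
  ⟨fun r s hrs => Subtype.ext <|
    (one_mul r.1).symm.trans ((congrArg Subtype.val hrs).trans (one_mul s.1))⟩

instance : (jF FR Λ).Faithful :=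
  ⟨id⟩

theorem unitMorphisms_le_monomorphisms :
    unitMorphisms FR Λ ≤ MorphismProperty.monomorphisms _ := by
  rintro X Y _ ⟨h, rfl⟩
  exact inferInstanceAs (Mono (unitHom FR Λ X Y h))

theorem inverseImage_unitMorphisms_le_monomorphisms :
    (unitMorphisms FR Λ).inverseImage (jF FR Λ) ≤ MorphismProperty.monomorphisms _ :=
  fun _ _ u hu =>
    have : Mono ((jF FR Λ).map u) := unitMorphisms_le_monomorphisms FR Λ _ hu
    (jF FR Λ).mono_of_mono_map this

theorem isPreglider_iff_torsionFree (M : Mod (OFF FR Λ)) :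
    IsPreglider FR Λ M ↔ Mod.TorsionFree (unitMorphisms FR Λ) M :=
  ⟨fun hM _ _ _ ⟨h, hu⟩ => hu ▸ hM _ _ h, fun hM _ _ h => hM _ ⟨h, rfl⟩⟩

theorem isPrefragment_iff_torsionFree (M : Mod (FF FR Λ)) :
    IsPrefragment FR Λ M ↔
      Mod.TorsionFree ((unitMorphisms FR Λ).inverseImage (jF FR Λ)) M := by
  refine ⟨?_, fun hM α β h => hM (unitHomFF FR Λ α β h) ⟨h, rfl⟩⟩
  rintro hM ⟨α⟩ ⟨β⟩ u ⟨h, hu⟩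
  obtain rfl : u = unitHomFF FR Λ α β h := hu
  exact hM α β h

section Statements

variable {Γ : Type u} [Group Γ] [PartialOrder Γ]
  [CovariantClass Γ Γ (· * ·) (· ≤ ·)] [CovariantClass Γ Γ (Function.swap (· * ·)) (· ≤ ·)]
  {R : Type u} [Ring R]

/-- `Preglid FR` is a cotilting torsion-free class in `Mod oFF_Λ R`, and
`Prefrag FR` is a cotilting torsion-free class in `Mod FF_Λ R`: each is closed under
subobjects and under extensions (stated via componentwise short exact sequences, which
agree with short exact sequences in these functor categories), the inclusion functor
admits a left adjoint, and every object of the ambient module category admits an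
epimorphism (componentwise surjection) from an object of the subcategory. -/
theorem statement_3 (FR : RingFiltration Γ R) (Λ : Set Γ) :
    -- `Preglid FR` is a cotilting torsion-free class in `Mod (oFF_Λ R)`:
    ((∀ (M N : Mod (OFF FR Λ)) (f : N ⟶ M), Mono f →
        IsPreglider FR Λ M → IsPreglider FR Λ N) ∧
     (∀ (A B C : Mod (OFF FR Λ)) (f : A ⟶ B) (g : B ⟶ C),
        (∀ X, Function.Injective (mapp f X)) →
        (∀ X, Function.Surjective (mapp g X)) →
        (∀ X (y : B.obj.obj X), mapp g X y = 0 ↔ y ∈ Set.range (mapp f X)) →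
        IsPreglider FR Λ A → IsPreglider FR Λ C → IsPreglider FR Λ B) ∧
     (∃ κ : Mod (OFF FR Λ) ⥤ Preglid FR Λ, Nonempty (κ ⊣ iotaF FR Λ)) ∧
     (∀ M : Mod (OFF FR Λ), ∃ (P : Preglid FR Λ) (p : (iotaF FR Λ).obj P ⟶ M),
        ∀ X, Function.Surjective (mapp p X))) ∧
    -- `Prefrag FR` is a cotilting torsion-free class in `Mod (FF_Λ R)`:
    ((∀ (M N : Mod (FF FR Λ)) (f : N ⟶ M), Mono f →
        IsPrefragment FR Λ M → IsPrefragment FR Λ N) ∧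
     (∀ (A B C : Mod (FF FR Λ)) (f : A ⟶ B) (g : B ⟶ C),
        (∀ X, Function.Injective (mapp f X)) →
        (∀ X, Function.Surjective (mapp g X)) →
        (∀ X (y : B.obj.obj X), mapp g X y = 0 ↔ y ∈ Set.range (mapp f X)) →
        IsPrefragment FR Λ A → IsPrefragment FR Λ C → IsPrefragment FR Λ B) ∧
     (∃ θ : Mod (FF FR Λ) ⥤ Prefrag FR Λ, Nonempty (θ ⊣ etaF FR Λ)) ∧
     (∀ M : Mod (FF FR Λ), ∃ (P : Prefrag FR Λ) (p : (etaF FR Λ).obj P ⟶ M),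
        ∀ X, Function.Surjective (mapp p X))) := by
  have hO := isCotiltingTorsionFreeClass_of_iff_torsionFree (unitMorphisms_le_monomorphisms FR Λ)
    (isPreglider_iff_torsionFree FR Λ)
  have hF := isCotiltingTorsionFreeClass_of_iff_torsionFree
    (inverseImage_unitMorphisms_le_monomorphisms FR Λ) (isPrefragment_iff_torsionFree FR Λ)
  exact ⟨⟨hO.of_mono, hO.of_exact, hO.exists_leftAdjoint, hO.exists_surjective⟩,
    ⟨hF.of_mono, hF.of_exact, hF.exists_leftAdjoint, hF.exists_surjective⟩⟩

end Statements

end GliderPaper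
end
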